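/- arXiv:math/0010240 — 4 statements merged into one kernel-verified Lean document; each statement's English description precedes it below -/
import Mathlib

section
/- Let z : ℝ → ℓ²(ℤ,ℂ) be differentiable (in ℓ² norm) with z'(t) = L_A z(t) for all t ∈ ℝ. Then the quantity I(t) = ∑_{n∈ℤ} ρ_n |z_n(t)|² (the sum converges absolutely since (ρ_n) is bounded and z(t) ∈ ℓ²) is constant in t: I(t) = I(0) for all t ∈ ℝ. -/
noncomputable section
open scoped ENNReal ComplexConjugate

/-- Squared Euclidean norm `|q|² = q₁² + q₂²` of a lattice vector `q ∈ ℤ²`. -/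
def nsq (q : ℤ × ℤ) : ℝ := (q.1 : ℝ)^2 + (q.2 : ℝ)^2

/-- `ρ_n = |k̂ + np|⁻² − |p|⁻²`. -/
def rho (kh p : ℤ × ℤ) (n : ℤ) : ℝ := (nsq (kh + n • p))⁻¹ - (nsq p)⁻¹

lemma one_le_nsq {q : ℤ × ℤ} (hq : q ≠ 0) : 1 ≤ nsq q := by
  have h : q.1 ≠ 0 ∨ q.2 ≠ 0 := by
    by_contra h
    push_neg at h
    exact hq (Prod.ext h.1 h.2)
  rcases h with h | h
  · have h1 : (1 : ℤ) ≤ |q.1| := Int.one_le_abs h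
    have h2 : (1 : ℝ) ≤ |(q.1 : ℝ)| := by exact_mod_cast (by simpa using h1 : (1:ℤ) ≤ |q.1|)
    have : (1 : ℝ) ≤ (q.1 : ℝ) ^ 2 := by nlinarith [sq_abs ((q.1:ℝ))]
    have h3 := sq_nonneg ((q.2 : ℝ))
    unfold nsq; nlinarith
  · have h1 : (1 : ℤ) ≤ |q.2| := Int.one_le_abs h
    have h2 : (1 : ℝ) ≤ |(q.2 : ℝ)| := by exact_mod_cast h1
    have : (1 : ℝ) ≤ (q.2 : ℝ) ^ 2 := by nlinarith [sq_abs ((q.2:ℝ))]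
    have h3 := sq_nonneg ((q.1 : ℝ))
    unfold nsq; nlinarith

lemma rho_abs_le (kh p : ℤ × ℤ) (hp : p ≠ 0)
    (hdet : p.1 * kh.2 - p.2 * kh.1 ≠ 0) (n : ℤ) : |rho kh p n| ≤ 1 := by
  have hq : kh + n • p ≠ 0 := by
    intro h
    apply hdet
    have h1 : kh.1 + n * p.1 = 0 := by
      have := congrArg Prod.fst h
      simpa using this
    have h2 : kh.2 + n * p.2 = 0 := by
      have := congrArg Prod.snd h
      simpa using this
    have e1 : kh.1 = -n * p.1 := by linarith
    have e2 : kh.2 = -n * p.2 := by linarith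
    rw [e1, e2]; ring
  have ha : 1 ≤ nsq (kh + n • p) := one_le_nsq hq
  have hb : 1 ≤ nsq p := one_le_nsq hp
  have ha0 : 0 < nsq (kh + n • p) := lt_of_lt_of_le one_pos ha
  have hb0 : 0 < nsq p := lt_of_lt_of_le one_pos hb
  have ha1 : (nsq (kh + n • p))⁻¹ ≤ 1 := by
    rw [inv_le_one_iff₀]; right; exact ha
  have hb1 : (nsq p)⁻¹ ≤ 1 := by
    rw [inv_le_one_iff₀]; right; exact hb
  have ha2 : 0 < (nsq (kh + n • p))⁻¹ := inv_pos.mpr ha0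
  have hb2 : 0 < (nsq p)⁻¹ := inv_pos.mpr hb0
  rw [abs_le]
  unfold rho
  constructor <;> linarith


lemma sq_summable (x : lp (fun _ : ℤ => ℂ) 2) : Summable fun n => ‖x n‖ ^ 2 := by
  have h := (lp.memℓp x).summable (p := 2) (by norm_num)
  simpa [Real.rpow_natCast] using h

lemma mem_mul (r : ℤ → ℝ) (hr : ∀ n, |r n| ≤ 1) (x : lp (fun _ : ℤ => ℂ) 2) :
    Memℓp (fun n => (r n : ℂ) * x n) 2 := by
  apply memℓp_gen
  have h2 : ((2 : ℝ≥0∞).toReal) = (2 : ℝ) := by norm_num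
  rw [h2]
  have : ∀ n : ℤ, ‖(r n : ℂ) * x n‖ ^ (2:ℝ) ≤ ‖x n‖ ^ 2 := by
    intro n
    rw [show ‖(r n : ℂ) * x n‖ ^ (2:ℝ) = ‖(r n : ℂ) * x n‖ ^ (2:ℕ) by
      simpa using Real.rpow_natCast _ 2]
    have h1 : ‖(r n : ℂ) * x n‖ ≤ ‖x n‖ := by
      rw [norm_mul, Complex.norm_real]
      calc ‖r n‖ * ‖x n‖ ≤ 1 * ‖x n‖ := by
            apply mul_le_mul_of_nonneg_right _ (norm_nonneg _)
            simpa [Real.norm_eq_abs] using hr n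
        _ = ‖x n‖ := one_mul _
    exact pow_le_pow_left₀ (norm_nonneg _) h1 2
  exact Summable.of_nonneg_of_le (fun n => by positivity) this (sq_summable x)

/-- Multiplication by a bounded real sequence as a continuous linear map on ℓ². -/
def mulOp (r : ℤ → ℝ) (hr : ∀ n, |r n| ≤ 1) :
    lp (fun _ : ℤ => ℂ) 2 →L[ℂ] lp (fun _ : ℤ => ℂ) 2 :=
  LinearMap.mkContinuous
    { toFun := fun x => ⟨fun n => (r n : ℂ) * x n, mem_mul r hr x⟩
      map_add' := fun x y => by
        apply lp.ext
        funext n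
        simp [mul_add]; rfl
      map_smul' := fun c x => by
        apply lp.ext
        funext n
        simp; ring }
    1
    (fun x => by
      rw [one_mul]
      apply lp.norm_le_of_tsum_le (by norm_num) (norm_nonneg x)
      have hx : ‖x‖ ^ ((2:ℝ≥0∞).toReal) = ∑' n, ‖x n‖ ^ ((2:ℝ≥0∞).toReal) :=
        lp.norm_rpow_eq_tsum (by norm_num) x
      rw [hx]
      apply Summable.tsum_le_tsum _ _ ((lp.memℓp x).summable (by norm_num))
      · intro n
        have h1 : ‖(r n : ℂ) * x n‖ ≤ ‖x n‖ := by
          rw [norm_mul, Complex.norm_real]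
          calc ‖r n‖ * ‖x n‖ ≤ 1 * ‖x n‖ := by
                apply mul_le_mul_of_nonneg_right _ (norm_nonneg _)
                simpa [Real.norm_eq_abs] using hr n
            _ = ‖x n‖ := one_mul _
        exact Real.rpow_le_rpow (norm_nonneg _) h1 (by norm_num)
      · exact (lp.memℓp _).summable (by norm_num))

lemma mulOp_apply (r : ℤ → ℝ) (hr : ∀ n, |r n| ≤ 1) (x : lp (fun _ : ℤ => ℂ) 2) (n : ℤ) :
    mulOp r hr x n = (r n : ℂ) * x n := rfl


lemma inner_mulOp_symm (r : ℤ → ℝ) (hr : ∀ n, |r n| ≤ 1) (x y : lp (fun _ : ℤ => ℂ) 2) :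
    (inner ℂ x (mulOp r hr y) : ℂ) = inner ℂ (mulOp r hr x) y := by
  rw [lp.inner_eq_tsum, lp.inner_eq_tsum]
  congr 1
  funext n
  simp only [RCLike.inner_apply, mulOp_apply, map_mul, Complex.conj_ofReal]
  ring

lemma key_zero (r : ℤ → ℝ) (hr : ∀ n, |r n| ≤ 1) (a : ℝ)
    (x w : lp (fun _ : ℤ => ℂ) 2)
    (hw : ∀ n : ℤ, w n = Complex.I * (a : ℂ) *
      ((r (n - 1) : ℂ) * x (n - 1) + (r (n + 1) : ℂ) * x (n + 1))) :
    (inner ℂ (mulOp r hr x) w : ℂ).re = 0 := by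
  classical
  set f : ℤ → ℂ := fun n =>
    Complex.I * (a : ℂ) * (r n : ℂ) * (r (n + 1) : ℂ) * (starRingEnd ℂ) (x n) * x (n + 1) with hf
  set g : ℤ → ℂ := fun n =>
    Complex.I * (a : ℂ) * (r n : ℂ) * (r (n + 1) : ℂ) * (starRingEnd ℂ) (x (n + 1)) * x n with hg
  have hterm : ∀ n : ℤ, (inner ℂ ((mulOp r hr x) n) (w n) : ℂ) = f n + g (n - 1) := by
    intro n
    simp only [RCLike.inner_apply, mulOp_apply, hw n, map_mul, Complex.conj_ofReal, hf, hg,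
      sub_add_cancel]
    ring
  have hsum : Summable fun n : ℤ => (inner ℂ ((mulOp r hr x) n) (w n) : ℂ) :=
    lp.summable_inner _ _
  rw [lp.inner_eq_tsum, Complex.re_tsum hsum]
  have Sx : Summable fun n : ℤ => ‖x n‖ ^ 2 := sq_summable x
  have Sx1 : Summable fun n : ℤ => ‖x (n + 1)‖ ^ 2 := by
    have := (Equiv.addRight (1 : ℤ)).summable_iff.mpr Sx
    simpa [Function.comp_def] using this
  have hbound : ∀ n : ℤ, ‖f n‖ ≤ |a| * (‖x n‖ ^ 2 + ‖x (n + 1)‖ ^ 2) ∧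
      ‖g n‖ ≤ |a| * (‖x n‖ ^ 2 + ‖x (n + 1)‖ ^ 2) := by
    intro n
    have h1 := hr n
    have h2 := hr (n + 1)
    have h3 := abs_nonneg (r n)
    have h4 := abs_nonneg (r (n + 1))
    have h5 := norm_nonneg (x n)
    have h6 := norm_nonneg (x (n + 1))
    have h7 := abs_nonneg a
    have h9 : ‖x n‖ * ‖x (n + 1)‖ ≤ ‖x n‖ ^ 2 + ‖x (n + 1)‖ ^ 2 := by
      nlinarith [sq_nonneg (‖x n‖ - ‖x (n + 1)‖)]
    have h10 : |a| * |r n| * |r (n + 1)| * ‖x n‖ * ‖x (n + 1)‖ ≤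
        |a| * (‖x n‖ * ‖x (n + 1)‖) := by
      have h8 : |r n| * |r (n + 1)| ≤ 1 := by nlinarith
      nlinarith [mul_le_mul_of_nonneg_right (mul_le_mul_of_nonneg_left h8 h7)
        (mul_nonneg h5 h6)]
    have h11 : |a| * (‖x n‖ * ‖x (n + 1)‖) ≤ |a| * (‖x n‖ ^ 2 + ‖x (n + 1)‖ ^ 2) :=
      mul_le_mul_of_nonneg_left h9 h7
    constructor
    · have hfe : ‖f n‖ = |a| * |r n| * |r (n + 1)| * ‖x n‖ * ‖x (n + 1)‖ := by
        simp [hf, norm_mul, Complex.norm_real, Real.norm_eq_abs]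
      rw [hfe]
      linarith
    · have hge : ‖g n‖ = |a| * |r n| * |r (n + 1)| * ‖x n‖ * ‖x (n + 1)‖ := by
        simp [hg, norm_mul, Complex.norm_real, Real.norm_eq_abs]
        ring
      rw [hge]
      linarith
  have Sbig : Summable fun n : ℤ => |a| * (‖x n‖ ^ 2 + ‖x (n + 1)‖ ^ 2) :=
    (Sx.add Sx1).mul_left _
  have Sf : Summable fun n : ℤ => (f n).re := by
    apply Summable.of_norm_bounded Sbig
    intro n
    exact le_trans (by simpa using Complex.abs_re_le_norm (f n)) (hbound n).1
  have Sg : Summable fun n : ℤ => (g n).re := by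
    apply Summable.of_norm_bounded Sbig
    intro n
    exact le_trans (by simpa using Complex.abs_re_le_norm (g n)) (hbound n).2
  have Sgs : Summable fun n : ℤ => (g (n - 1)).re := by
    have := (Equiv.subRight (1 : ℤ)).summable_iff.mpr Sg
    simpa [Function.comp_def] using this
  have hcancel : ∀ n : ℤ, (f n).re + (g n).re = 0 := by
    intro n
    simp only [hf, hg, Complex.mul_re, Complex.mul_im, Complex.I_re, Complex.I_im,
      Complex.ofReal_re, Complex.ofReal_im, Complex.conj_re, Complex.conj_im]
    ring
  calc (∑' n : ℤ, (inner ℂ ((mulOp r hr x) n) (w n) : ℂ).re)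
      = ∑' n : ℤ, ((f n).re + (g (n - 1)).re) := by
        congr 1; funext n; rw [hterm n, Complex.add_re]
    _ = (∑' n : ℤ, (f n).re) + ∑' n : ℤ, (g (n - 1)).re := Summable.tsum_add Sf Sgs
    _ = (∑' n : ℤ, (f n).re) + ∑' n : ℤ, (g n).re := by
        congr 1
        exact (Equiv.subRight (1 : ℤ)).tsum_eq fun n => (g n).re
    _ = ∑' n : ℤ, ((f n).re + (g n).re) := (Summable.tsum_add Sf Sg).symm
    _ = 0 := by simp [hcancel]

/-- The functional `I(z) = ∑_{n∈ℤ} ρ_n |z_n|²` is a constant of motion for the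
linearized 2D Euler equation `ż = L_A z` on the invariant class `Σ_{k̂}`. -/
theorem stmt2 (p kh : ℤ × ℤ) (hp : p ≠ 0) (hkh : kh ≠ 0)
    (hdet : p.1 * kh.2 - p.2 * kh.1 ≠ 0)
    (Γ : ℂ) (hΓ : Γ ≠ 0) (a : ℝ)
    (ha : a = (1/2) * ‖Γ‖ * ((p.1 : ℝ) * (kh.2 : ℝ) - (p.2 : ℝ) * (kh.1 : ℝ)))
    (T : lp (fun _ : ℤ => ℂ) 2 →L[ℂ] lp (fun _ : ℤ => ℂ) 2)
    (hT : ∀ (z : lp (fun _ : ℤ => ℂ) 2) (n : ℤ),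
      T z n = Complex.I * (a : ℂ) *
        ((rho kh p (n - 1) : ℂ) * z (n - 1) + (rho kh p (n + 1) : ℂ) * z (n + 1)))
    (z : ℝ → lp (fun _ : ℤ => ℂ) 2)
    (hz : ∀ t : ℝ, HasDerivAt z (T (z t)) t) :
    ∀ t : ℝ, ∑' n : ℤ, rho kh p n * ‖z t n‖^2 = ∑' n : ℤ, rho kh p n * ‖z 0 n‖^2 := by
  have hr : ∀ n, |rho kh p n| ≤ 1 := rho_abs_le kh p hp hdet
  have hid : ∀ u : lp (fun _ : ℤ => ℂ) 2,
      (inner ℂ u (mulOp (rho kh p) hr u) : ℂ).re = ∑' n : ℤ, rho kh p n * ‖u n‖ ^ 2 := by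
    intro u
    have hterm : ∀ n : ℤ, (inner ℂ (u n) ((mulOp (rho kh p) hr u) n) : ℂ)
        = ((rho kh p n * ‖u n‖ ^ 2 : ℝ) : ℂ) := by
      intro n
      rw [RCLike.inner_apply', mulOp_apply]
      rw [show (starRingEnd ℂ) (u n) * ((rho kh p n : ℂ) * u n)
          = (rho kh p n : ℂ) * ((starRingEnd ℂ) (u n) * u n) by ring]
      rw [Complex.conj_mul']
      push_cast
      ring
    have hs : Summable fun n : ℤ => (inner ℂ (u n) ((mulOp (rho kh p) hr u) n) : ℂ) :=
      lp.summable_inner _ _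
    rw [lp.inner_eq_tsum, Complex.re_tsum hs]
    congr 1
    funext n
    rw [hterm n, Complex.ofReal_re]
  have hΦ : ∀ t : ℝ, HasDerivAt
      (fun s => (inner ℂ (z s) (mulOp (rho kh p) hr (z s)) : ℂ).re) 0 t := by
    intro t
    have hMz : HasDerivAt (fun s => mulOp (rho kh p) hr (z s))
        (mulOp (rho kh p) hr (T (z t))) t := by
      simpa [Function.comp_def] using
        (((mulOp (rho kh p) hr).restrictScalars ℝ).hasFDerivAt
          (x := z t)).comp_hasDerivAt t (hz t)
    have hInner := (hz t).inner ℂ hMz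
    have e1 : (inner ℂ (z t) (mulOp (rho kh p) hr (T (z t))) : ℂ)
        = inner ℂ (mulOp (rho kh p) hr (z t)) (T (z t)) :=
      inner_mulOp_symm (rho kh p) hr (z t) (T (z t))
    have e2 : (inner ℂ (T (z t)) (mulOp (rho kh p) hr (z t)) : ℂ)
        = (starRingEnd ℂ) (inner ℂ (mulOp (rho kh p) hr (z t)) (T (z t)) : ℂ) :=
      (inner_conj_symm (𝕜 := ℂ) (T (z t)) (mulOp (rho kh p) hr (z t))).symm
    have hk : (inner ℂ (mulOp (rho kh p) hr (z t)) (T (z t)) : ℂ).re = 0 :=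
      key_zero (rho kh p) hr a (z t) (T (z t)) (fun n => hT (z t) n)
    have hzero : ((inner ℂ (z t) (mulOp (rho kh p) hr (T (z t))) : ℂ)
        + inner ℂ (T (z t)) (mulOp (rho kh p) hr (z t))).re = 0 := by
      rw [Complex.add_re, e1, e2, Complex.conj_re, hk]
      ring
    have hcomp := Complex.reCLM.hasFDerivAt.comp_hasDerivAt t hInner
    simpa [Function.comp_def, hzero] using hcomp
  intro t
  have hdiff : Differentiable ℝ
      (fun s => (inner ℂ (z s) (mulOp (rho kh p) hr (z s)) : ℂ).re) :=
    fun s => (hΦ s).differentiableAt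
  have hconst := is_const_of_deriv_eq_zero hdiff (fun s => (hΦ s).deriv) t 0
  calc ∑' n : ℤ, rho kh p n * ‖z t n‖ ^ 2
      = (inner ℂ (z t) (mulOp (rho kh p) hr (z t)) : ℂ).re := (hid (z t)).symm
    _ = (inner ℂ (z 0) (mulOp (rho kh p) hr (z 0)) : ℂ).re := hconst
    _ = ∑' n : ℤ, rho kh p n * ‖z 0 n‖ ^ 2 := hid (z 0)
end
end

section
/- Suppose |k̂ + np| > |p| for every n ∈ ℤ. If λ ∈ ℂ and z ∈ ℓ²(ℤ,ℂ) with z ≠ 0 satisfy L_A z = λ z, then Re λ = 0; i.e. when the class Σ_{k̂} does not meet the closed disk D̄_{|p|}, all eigenvalues of L_A are purely imaginary or zero. -/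
noncomputable section

set_option maxHeartbeats 1000000 in
/-- If the class `Σ_{k̂}` avoids the closed disk `D̄_{|p|}` (`|k̂ + np| > |p|` for all
`n ∈ ℤ`), then every eigenvalue of `L_A` is purely imaginary or zero. -/
theorem stmt9 (p kh : ℤ × ℤ) (hp : p ≠ 0) (hkh : kh ≠ 0)
    (hdet : p.1 * kh.2 - p.2 * kh.1 ≠ 0)
    (Γ : ℂ) (hΓ : Γ ≠ 0) (a : ℝ)
    (ha : a = (1/2) * ‖Γ‖ * ((p.1 : ℝ) * (kh.2 : ℝ) - (p.2 : ℝ) * (kh.1 : ℝ)))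
    (hout : ∀ n : ℤ, nsq p < nsq (kh + n • p))
    (T : lp (fun _ : ℤ => ℂ) 2 →L[ℂ] lp (fun _ : ℤ => ℂ) 2)
    (hT : ∀ (z : lp (fun _ : ℤ => ℂ) 2) (n : ℤ),
      T z n = Complex.I * (a : ℂ) *
        ((rho kh p (n - 1) : ℂ) * z (n - 1) + (rho kh p (n + 1) : ℂ) * z (n + 1)))
    (lam : ℂ) (z : lp (fun _ : ℤ => ℂ) 2) (hz0 : z ≠ 0) (hz : T z = lam • z) :
    lam.re = 0 := by
  classical
  set r : ℤ → ℝ := rho kh p with hrdef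
  set w : ℤ → ℂ := fun n => z n with hwdef
  -- positivity of |p|²
  have hpsq : 0 < nsq p := by
    have h1 : p.1 ≠ 0 ∨ p.2 ≠ 0 := by
      by_contra h
      push_neg at h
      exact hp (Prod.ext h.1 h.2)
    rcases h1 with h | h
    · have : (0:ℝ) < (p.1:ℝ)^2 := by positivity
      have : (0:ℝ) ≤ (p.2:ℝ)^2 := sq_nonneg _
      unfold nsq; nlinarith [sq_nonneg ((p.1:ℝ)), sq_nonneg ((p.2:ℝ)),
        pow_pos (abs_pos.mpr (show ((p.1:ℝ)) ≠ 0 by exact_mod_cast h)) 2]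
    · unfold nsq
      have h2 : (0:ℝ) < (p.2:ℝ)^2 := by
        have : ((p.2:ℝ)) ≠ 0 := by exact_mod_cast h
        positivity
      nlinarith [sq_nonneg ((p.1:ℝ))]
  set C : ℝ := (nsq p)⁻¹ with hCdef
  have hC : 0 < C := inv_pos.mpr hpsq
  have hrneg : ∀ n, r n < 0 := by
    intro n
    have h := hout n
    have : (nsq (kh + n • p))⁻¹ < (nsq p)⁻¹ := by
      exact inv_strictAnti₀ hpsq h
    simpa [hrdef, rho, sub_neg] using this
  have hrabs : ∀ n, |r n| ≤ C := by
    intro n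
    have h1 : 0 < nsq (kh + n • p) := lt_trans hpsq (hout n)
    have h2 : 0 ≤ (nsq (kh + n • p))⁻¹ := le_of_lt (inv_pos.mpr h1)
    have : |r n| = -(r n) := abs_of_neg (hrneg n)
    rw [this]
    simp only [hrdef, rho, neg_sub]
    linarith
  -- the pointwise eigenvalue equation
  have heq : ∀ n : ℤ, Complex.I * (a : ℂ) * ((r (n-1) : ℂ) * w (n-1) + (r (n+1) : ℂ) * w (n+1))
      = lam * w n := by
    intro n
    have h1 := hT z n
    rw [hz] at h1
    have h2 : (lam • z) n = lam * z n := by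
      rw [lp.coeFn_smul]; simp
    rw [h2] at h1
    exact h1.symm
  -- square summability of z and shifts
  have hz2 : Summable (fun n : ℤ => ‖w n‖ ^ 2) := by
    have h := (lp.memℓp z).summable (by norm_num : (0:ℝ) < ENNReal.toReal 2)
    have h2 : (fun n : ℤ => ‖z n‖ ^ ENNReal.toReal 2) = fun n : ℤ => ‖w n‖ ^ 2 := by
      funext n
      rw [show (ENNReal.toReal 2) = ((2:ℕ):ℝ) by norm_num, Real.rpow_natCast]
    rwa [h2] at h
  have hz2m : Summable (fun n : ℤ => ‖w (n-1)‖ ^ 2) := by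
    have h := ((Equiv.subRight (1:ℤ)).summable_iff (f := fun n : ℤ => ‖w n‖ ^ 2)).mpr hz2
    exact h
  have hz2p : Summable (fun n : ℤ => ‖w (n+1)‖ ^ 2) := by
    have h := ((Equiv.addRight (1:ℤ)).summable_iff (f := fun n : ℤ => ‖w n‖ ^ 2)).mpr hz2
    exact h
  have hprodm : Summable (fun n : ℤ => ‖w (n-1)‖ * ‖w n‖) := by
    apply Summable.of_nonneg_of_le (fun n => by positivity)
      (fun n => ?_) (hz2m.add hz2)
    nlinarith [sq_nonneg (‖w (n-1)‖ - ‖w n‖), norm_nonneg (w (n-1)), norm_nonneg (w n),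
      mul_nonneg (norm_nonneg (w (n-1))) (norm_nonneg (w n))]
  have hprodp : Summable (fun n : ℤ => ‖w (n+1)‖ * ‖w n‖) := by
    apply Summable.of_nonneg_of_le (fun n => by positivity)
      (fun n => ?_) (hz2p.add hz2)
    nlinarith [sq_nonneg (‖w (n+1)‖ - ‖w n‖), norm_nonneg (w (n+1)), norm_nonneg (w n),
      mul_nonneg (norm_nonneg (w (n+1))) (norm_nonneg (w n))]
  -- the three complex sequences
  set A : ℤ → ℂ := fun n =>
    Complex.I * (a : ℂ) * (r (n-1) : ℂ) * w (n-1) * (starRingEnd ℂ) (w n) * (-(r n) : ℂ)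
    with hAdef
  set B : ℤ → ℂ := fun n =>
    Complex.I * (a : ℂ) * (r (n+1) : ℂ) * w (n+1) * (starRingEnd ℂ) (w n) * (-(r n) : ℂ)
    with hBdef
  set f : ℤ → ℂ := fun n => lam * w n * (starRingEnd ℂ) (w n) * (-(r n) : ℂ) with hfdef
  have hfAB : ∀ n, f n = A n + B n := by
    intro n
    simp only [hfdef, hAdef, hBdef]
    rw [← heq n]
    push_cast
    ring
  -- summability of A and B
  have hnormA : ∀ n : ℤ, ‖A n‖ ≤ |a| * C * C * (‖w (n-1)‖ * ‖w n‖) := by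
    intro n
    have h1 : ‖A n‖ = |a| * |r (n-1)| * |r n| * (‖w (n-1)‖ * ‖w n‖) := by
      simp only [hAdef, norm_mul, Complex.norm_I, Complex.norm_real, norm_neg,
        RCLike.norm_conj, Real.norm_eq_abs, abs_neg]
      ring
    rw [h1]
    have := hrabs (n-1); have := hrabs n
    have h2 : 0 ≤ ‖w (n-1)‖ * ‖w n‖ := mul_nonneg (norm_nonneg _) (norm_nonneg _)
    gcongr <;> first | exact hrabs _ | positivity
  have hnormB : ∀ n : ℤ, ‖B n‖ ≤ |a| * C * C * (‖w (n+1)‖ * ‖w n‖) := by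
    intro n
    have h1 : ‖B n‖ = |a| * |r (n+1)| * |r n| * (‖w (n+1)‖ * ‖w n‖) := by
      simp only [hBdef, norm_mul, Complex.norm_I, Complex.norm_real, norm_neg,
        RCLike.norm_conj, Real.norm_eq_abs, abs_neg]
      ring
    rw [h1]
    have h2 : 0 ≤ ‖w (n+1)‖ * ‖w n‖ := mul_nonneg (norm_nonneg _) (norm_nonneg _)
    gcongr <;> first | exact hrabs _ | positivity
  have hA : Summable A :=
    Summable.of_norm_bounded (hprodm.mul_left (|a| * C * C)) hnormA
  have hB : Summable B :=
    Summable.of_norm_bounded (hprodp.mul_left (|a| * C * C)) hnormB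
  have hf : Summable f := by
    have : (fun n => A n + B n) = f := by funext n; rw [hfAB n]
    rw [← this]; exact hA.add hB
  -- the weighted sum S
  set g : ℤ → ℝ := fun n => Complex.normSq (w n) * (-(r n)) with hgdef
  have hg : Summable g := by
    apply Summable.of_nonneg_of_le
      (fun n => mul_nonneg (Complex.normSq_nonneg _) (by linarith [hrneg n]))
      (fun n => ?_) (hz2.mul_left C)
    have h1 : Complex.normSq (w n) = ‖w n‖ ^ 2 := by
      rw [Complex.normSq_eq_norm_sq]
    rw [h1]
    have h2 : -(r n) ≤ C := by
      have := hrabs n; have := abs_of_neg (hrneg n); linarith [le_of_eq this.symm,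
        (abs_le.mp (hrabs n)).2]
    have h3 : (0:ℝ) ≤ ‖w n‖ ^ 2 := sq_nonneg _
    calc ‖w n‖ ^ 2 * (-(r n)) ≤ ‖w n‖ ^ 2 * C := by
          apply mul_le_mul_of_nonneg_left _ h3
          have h4 := abs_of_neg (hrneg n)
          have h5 := hrabs n
          linarith
      _ = C * ‖w n‖ ^ 2 := by ring
  set S : ℝ := ∑' n, g n with hSdef
  have hSpos : 0 < S := by
    have hex : ∃ n, w n ≠ 0 := by
      by_contra h
      push_neg at h
      apply hz0
      apply lp.ext
      funext n
      exact h n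
    obtain ⟨n0, hn0⟩ := hex
    apply Summable.tsum_pos hg
      (fun n => mul_nonneg (Complex.normSq_nonneg _) (by linarith [hrneg n])) n0
    have h1 : 0 < Complex.normSq (w n0) := Complex.normSq_pos.mpr hn0
    have h2 : 0 < -(r n0) := by linarith [hrneg n0]
    exact mul_pos h1 h2
  -- compute ∑ f two ways
  have key1 : ∑' n, f n = lam * (S : ℂ) := by
    have h1 : ∀ n, f n = lam * ((g n : ℝ) : ℂ) := by
      intro n
      simp only [hfdef, hgdef]
      rw [mul_assoc lam, Complex.mul_conj]
      push_cast
      ring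
    calc ∑' n, f n = ∑' n, lam * ((g n : ℝ) : ℂ) := by
          apply tsum_congr h1
      _ = lam * ∑' n, ((g n : ℝ) : ℂ) := tsum_mul_left
      _ = lam * (S : ℂ) := by rw [hSdef, Complex.ofReal_tsum]
  -- pairing: A (n+1) = - conj (B n)
  have hpair : ∀ n : ℤ, A (n+1) = -((starRingEnd ℂ) (B n)) := by
    intro n
    simp only [hAdef, hBdef, add_sub_cancel_right, map_mul, map_neg, Complex.conj_I,
      Complex.conj_ofReal, RingHomCompTriple.comp_apply, Complex.conj_conj, RingHom.id_apply]
    ring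
  have key2 : ∑' n, f n = -((starRingEnd ℂ) (∑' n, B n)) + ∑' n, B n := by
    have h1 : ∑' n, f n = ∑' n, A n + ∑' n, B n := by
      rw [← Summable.tsum_add hA hB]
      exact tsum_congr hfAB
    have h2 : ∑' n, A n = ∑' n, A (n + 1) := by
      have h := (Equiv.addRight (1:ℤ)).tsum_eq A
      simpa [Function.comp] using h.symm
    have h3 : ∑' n, A (n+1) = -((starRingEnd ℂ) (∑' n, B n)) := by
      calc ∑' n, A (n+1) = ∑' n, -((starRingEnd ℂ) (B n)) := tsum_congr hpair
        _ = -∑' n, (starRingEnd ℂ) (B n) := tsum_neg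
        _ = -((starRingEnd ℂ) (∑' n, B n)) := by
              simp only [starRingEnd_apply, tsum_star]
    rw [h1, h2, h3]
  -- take real parts
  have key3 : lam.re * S = 0 := by
    have h := key1.symm.trans key2
    have hre := congrArg Complex.re h
    simp only [Complex.add_re, Complex.neg_re, Complex.conj_re, Complex.mul_re,
      Complex.ofReal_re, Complex.ofReal_im, mul_zero, sub_zero] at hre
    linarith
  have := mul_eq_zero.mp key3
  rcases this with h | h
  · exact h
  · exact absurd h (ne_of_gt hSpos)
end
end

section
/- Let ã ∈ ℂ satisfy either Re ã ≠ 0, or Re ã = 0 and |ã| > 2. Then the quadratic equation w² − ã w − 1 = 0 has two roots w₊ and w₋ with w₊ w₋ = −1 and |w₊| > 1 > |w₋|; in particular it has no root of modulus 1. -/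
noncomputable section

/-- If `Re ã ≠ 0`, or `Re ã = 0` and `|ã| > 2`, then `w² − ã w − 1 = 0` has exactly two
roots `w₊`, `w₋` with `w₊ w₋ = −1` and `|w₊| > 1 > |w₋|`; in particular no root of
modulus one. -/
theorem stmt11 (at' : ℂ)
    (h : at'.re ≠ 0 ∨ (at'.re = 0 ∧ 2 < ‖at'‖)) :
    ∃ wp wm : ℂ,
      wp ^ 2 - at' * wp - 1 = 0 ∧
      wm ^ 2 - at' * wm - 1 = 0 ∧
      wp * wm = -1 ∧
      1 < ‖wp‖ ∧ ‖wm‖ < 1 ∧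
      (∀ w : ℂ, w ^ 2 - at' * w - 1 = 0 → w = wp ∨ w = wm) ∧
      (∀ w : ℂ, w ^ 2 - at' * w - 1 = 0 → ‖w‖ ≠ 1) := by
  -- no root can have modulus 1
  have key : ∀ w : ℂ, w ^ 2 - at' * w - 1 = 0 → ‖w‖ ≠ 1 := by
    intro w hw habs
    have hw0 : w ≠ 0 := by
      rintro rfl; simp at habs
    have hns : Complex.normSq w = 1 := by
      rw [← Complex.sq_norm, habs]; norm_num
    have hconj : w * (starRingEnd ℂ w) = 1 := by
      rw [Complex.mul_conj, hns]; norm_num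
    have hat : at' = w - starRingEnd ℂ w := by
      have h1 : at' * w = w ^ 2 - 1 := by linear_combination -hw
      have h2 : (w - starRingEnd ℂ w) * w = w ^ 2 - 1 := by
        have : (w - starRingEnd ℂ w) * w = w ^ 2 - w * starRingEnd ℂ w := by ring
        rw [this, hconj]
      exact mul_right_cancel₀ hw0 (h1.trans h2.symm)
    have hre : at'.re = 0 := by
      rw [hat]; simp
    have habs2 : ‖at'‖ ≤ 2 := by
      rw [hat]
      calc ‖w - starRingEnd ℂ w‖ ≤ ‖w‖ + ‖starRingEnd ℂ w‖ :=
            norm_sub_le _ _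
        _ = 2 := by rw [Complex.norm_conj, habs]; norm_num
    rcases h with h | ⟨_, h2⟩
    · exact h hre
    · exact absurd habs2 (not_le.mpr h2)
  obtain ⟨d, hd⟩ : ∃ d : ℂ, d ^ 2 = at' ^ 2 + 4 := by
    exact ⟨(at' ^ 2 + 4) ^ (((2 : ℕ) : ℂ))⁻¹,
      Complex.cpow_nat_inv_pow _ two_ne_zero⟩
  set r1 : ℂ := (at' + d) / 2 with hr1
  set r2 : ℂ := (at' - d) / 2 with hr2
  have hroot1 : r1 ^ 2 - at' * r1 - 1 = 0 := by
    rw [hr1]; linear_combination hd / 4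
  have hroot2 : r2 ^ 2 - at' * r2 - 1 = 0 := by
    rw [hr2]; linear_combination hd / 4
  have hprod : r1 * r2 = -1 := by
    rw [hr1, hr2]; linear_combination -hd / 4
  have hfact : ∀ w : ℂ, w ^ 2 - at' * w - 1 = 0 → w = r1 ∨ w = r2 := by
    intro w hw
    have : (w - r1) * (w - r2) = 0 := by
      rw [hr1, hr2]; linear_combination hw - hd / 4
    rcases mul_eq_zero.mp this with h | h
    · exact Or.inl (sub_eq_zero.mp h)
    · exact Or.inr (sub_eq_zero.mp h)
  have hprodabs : ‖r1‖ * ‖r2‖ = 1 := by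
    rw [← norm_mul, hprod]; simp
  have h1ne : ‖r1‖ ≠ 1 := key r1 hroot1
  have h2ne : ‖r2‖ ≠ 1 := key r2 hroot2
  rcases lt_or_gt_of_ne h1ne with hlt | hgt
  · -- |r1| < 1, so |r2| > 1
    have hpos : 0 < ‖r1‖ := by
      rcases eq_or_lt_of_le (norm_nonneg r1) with h0 | h0
      · exfalso; rw [← h0] at hprodabs; simp at hprodabs
      · exact h0
    have hr2gt : 1 < ‖r2‖ := by
      by_contra hc
      push_neg at hc
      nlinarith
    exact ⟨r2, r1, hroot2, hroot1, by rw [mul_comm]; exact hprod, hr2gt, hlt,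
      fun w hw => (hfact w hw).symm, key⟩
  · have hr2lt : ‖r2‖ < 1 := by
      nlinarith [norm_nonneg r2]
    exact ⟨r1, r2, hroot1, hroot2, hprod, hgt, hr2lt, hfact, key⟩
end
end

section
/- For every λ ∈ ℂ such that the operator L_A − λ·Id is injective on ℓ²(ℤ,ℂ), the range of L_A − λ·Id is dense in ℓ²(ℤ,ℂ); i.e. the residual spectrum of L_A (the set of λ for which L_A − λ·Id is injective but its range is not dense) is empty. -/
noncomputable section

open scoped InnerProductSpace ComplexConjugate ENNReal NNReal

local notation "E2" => lp (fun _ : ℤ => ℂ) 2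

set_option maxHeartbeats 2000000 in
/-- The residual spectrum of `L_A` is empty: whenever `L_A − λ·Id` is injective on
`ℓ²(ℤ,ℂ)`, its range is dense. -/
theorem stmt19 (p kh : ℤ × ℤ) (hp : p ≠ 0) (hkh : kh ≠ 0)
    (hdet : p.1 * kh.2 - p.2 * kh.1 ≠ 0)
    (Γ : ℂ) (hΓ : Γ ≠ 0) (a : ℝ)
    (ha : a = (1/2) * ‖Γ‖ * ((p.1 : ℝ) * (kh.2 : ℝ) - (p.2 : ℝ) * (kh.1 : ℝ)))
    (T : lp (fun _ : ℤ => ℂ) 2 →L[ℂ] lp (fun _ : ℤ => ℂ) 2)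
    (hT : ∀ (z : lp (fun _ : ℤ => ℂ) 2) (n : ℤ),
      T z n = Complex.I * (a : ℂ) *
        ((rho kh p (n - 1) : ℂ) * z (n - 1) + (rho kh p (n + 1) : ℂ) * z (n + 1))) :
    ∀ lam : ℂ,
      Function.Injective (fun z : lp (fun _ : ℤ => ℂ) 2 => T z - lam • z) →
      Dense (Set.range fun z : lp (fun _ : ℤ => ℂ) 2 => T z - lam • z) := by
  intro lam hinj
  set L : E2 →L[ℂ] E2 := T - lam • ContinuousLinearMap.id ℂ E2 with hLdef
  have hLfun : (fun z : E2 => T z - lam • z) = ⇑L := by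
    funext z
    simp [hLdef]
  rw [hLfun]
  by_contra hdense
  set K : Submodule ℂ E2 := LinearMap.range (L : E2 →ₗ[ℂ] E2) with hKdef
  have hKrange : (K : Set E2) = Set.range ⇑L := by
    rw [hKdef, LinearMap.coe_range]
    rfl
  have hKne : Kᗮ ≠ ⊥ := by
    intro h
    apply hdense
    rw [← hKrange]
    exact Submodule.dense_iff_topologicalClosure_eq_top.mpr
      (Submodule.topologicalClosure_eq_top_iff.mpr h)
  obtain ⟨y, hyK, hy0⟩ := Submodule.ne_bot_iff _ |>.mp hKne
  have hortho : ∀ z : E2, ⟪L z, y⟫_ℂ = 0 := fun z =>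
    (Submodule.mem_orthogonal K y).mp hyK _ ⟨z, rfl⟩
  -- abbreviation for the coefficient
  set c : ℤ → ℂ := fun m => Complex.I * (a : ℂ) * (rho kh p m : ℂ) with hcdef
  have hconj_c : ∀ m, conj (c m) = - c m := by
    intro m
    simp [hcdef, map_mul, Complex.conj_I, Complex.conj_ofReal]
  -- single application
  have hs : ∀ (i j : ℤ) (v : ℂ),
      (lp.single 2 i v : E2) j = if j = i then v else 0 := by
    intro i j v
    by_cases h : j = i
    · subst h; simp [lp.single_apply_self]
    · simp [lp.single_apply_ne _ _ _ h, h]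
  -- the recurrence satisfied by y
  have hrec : ∀ m : ℤ, (- c m) * (y (m - 1) + y (m + 1)) = conj lam * y m := by
    intro m
    have hdecomp : L (lp.single 2 m (1 : ℂ)) =
        lp.single 2 (m - 1) (c m) + lp.single 2 (m + 1) (c m) + lp.single 2 m (-lam) := by
      apply lp.ext
      funext n
      have hL' : (L (lp.single 2 m (1:ℂ)) : ∀ _ : ℤ, ℂ) n
          = T (lp.single 2 m (1:ℂ)) n - lam * (lp.single 2 m (1:ℂ) : E2) n := by
        simp only [hLdef, ContinuousLinearMap.sub_apply, ContinuousLinearMap.smul_apply,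
          ContinuousLinearMap.id_apply, lp.coeFn_sub, Pi.sub_apply, lp.coeFn_smul,
          Pi.smul_apply, smul_eq_mul]
      rw [hL', hT]
      have hadd : ((lp.single 2 (m - 1) (c m) + lp.single 2 (m + 1) (c m)
            + lp.single 2 m (-lam) : E2) : ∀ _ : ℤ, ℂ) n
          = (lp.single 2 (m - 1) (c m) : E2) n + (lp.single 2 (m + 1) (c m) : E2) n
            + (lp.single 2 m (-lam) : E2) n := by
        simp [lp.coeFn_add, Pi.add_apply]
      rw [hadd, hs, hs, hs, hs, hs, hs]
      by_cases h1 : n = m - 1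
      · subst h1
        rw [if_neg (by omega), if_pos (by omega), if_neg (by omega),
          if_pos (by omega), if_neg (by omega), if_neg (by omega)]
        rw [show m - 1 + 1 = m from by ring]
        simp [hcdef]
      · by_cases h2 : n = m + 1
        · subst h2
          rw [if_pos (by omega), if_neg (by omega), if_neg (by omega),
            if_neg (by omega), if_pos (by omega), if_neg (by omega)]
          rw [show m + 1 - 1 = m from by ring]
          simp [hcdef]
        · by_cases h3 : n = m
          · subst h3
            rw [if_neg (by omega), if_neg (by omega), if_pos rfl,
              if_neg (by omega), if_neg (by omega), if_pos rfl]
            simp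
          · rw [if_neg (by omega), if_neg (by omega), if_neg h3,
              if_neg h1, if_neg h2, if_neg h3]
            simp
    have h0 := hortho (lp.single 2 m (1 : ℂ))
    rw [hdecomp] at h0
    rw [inner_add_left, inner_add_left, lp.inner_single_left, lp.inner_single_left,
      lp.inner_single_left] at h0
    simp only [RCLike.inner_apply] at h0
    rw [hconj_c] at h0
    have : (- c m) * y (m - 1) + (- c m) * y (m + 1) + (- conj lam) * y m = 0 := by
      simp [map_neg] at h0
      linear_combination h0
    linear_combination this - (-(conj lam) * y m)
  -- Step B: the candidate eigenvector
  have htR : (0:ℝ) < (2:ℝ≥0∞).toReal := by norm_num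
  have hy2 : Summable (fun n : ℤ => ‖y n‖ ^ (2:ℝ≥0∞).toReal) :=
    (memℓp_gen_iff htR).mp (lp.memℓp y)
  set u : ℤ → ℂ := fun n => y (n - 1) + y (n + 1) with hudef
  have hu1 : Summable (fun n : ℤ => ‖y (n - 1)‖ ^ (2:ℝ≥0∞).toReal) :=
    ((Equiv.subRight (1:ℤ)).summable_iff).mpr hy2
  have hu2 : Summable (fun n : ℤ => ‖y (n + 1)‖ ^ (2:ℝ≥0∞).toReal) :=
    ((Equiv.addRight (1:ℤ)).summable_iff).mpr hy2
  have hmemu : Memℓp u 2 := by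
    have h1 : Memℓp (fun n : ℤ => y (n - 1)) 2 := memℓp_gen hu1
    have h2 : Memℓp (fun n : ℤ => y (n + 1)) 2 := memℓp_gen hu2
    exact h1.add h2
  have humem2 : Summable (fun n : ℤ => ‖u n‖ ^ (2:ℝ≥0∞).toReal) :=
    (memℓp_gen_iff htR).mp hmemu
  have hvmem : Memℓp (fun n : ℤ => conj (u n)) 2 := by
    apply memℓp_gen
    simpa only [RCLike.norm_conj] using humem2
  set v : E2 := ⟨fun n => conj (u n), hvmem⟩ with hvdef
  have hva : ∀ n : ℤ, (v : ∀ _ : ℤ, ℂ) n = conj (u n) := fun n => rfl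
  -- Step C: v ≠ 0
  have hvne : v ≠ 0 := by
    intro hv
    apply hy0
    have hu0 : ∀ n, u n = 0 := by
      intro n
      have h1 : (v : ∀ _ : ℤ, ℂ) n = 0 := by rw [hv, lp.coeFn_zero]; rfl
      rw [hva] at h1
      have := congrArg conj h1
      simpa using this
    have hstep : ∀ n : ℤ, y (n + 2) = - y n := by
      intro n
      have h := hu0 (n + 1)
      rw [hudef] at h
      simp only at h
      rw [show (n:ℤ) + 1 - 1 = n from by ring, show (n:ℤ) + 1 + 1 = n + 2 from by ring] at h
      linear_combination h
    have hnorm : ∀ (n : ℤ) (k : ℕ), ‖y (n + 2 * k)‖ = ‖y n‖ := by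
      intro n k
      induction k with
      | zero => simp
      | succ k ih =>
        have he : (n + 2 * ((k:ℤ)+1) : ℤ) = (n + 2*k) + 2 := by ring
        rw [show ((k+1 : ℕ) : ℤ) = (k:ℤ)+1 from by push_cast; ring, he, hstep, norm_neg, ih]
    have hyzero : ∀ n, y n = 0 := by
      intro n
      have hinjk : Function.Injective (fun k : ℕ => n + 2 * (k:ℤ)) := by
        intro i j h
        simp only at h
        omega
      have hsum : Summable (fun k : ℕ => ‖y (n + 2 * (k:ℤ))‖ ^ (2:ℝ≥0∞).toReal) :=
        hy2.comp_injective hinjk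
      have hconst : Summable (fun _ : ℕ => ‖y n‖ ^ (2:ℝ≥0∞).toReal) := by
        have : (fun k : ℕ => ‖y (n + 2 * (k:ℤ))‖ ^ (2:ℝ≥0∞).toReal)
            = fun _ : ℕ => ‖y n‖ ^ (2:ℝ≥0∞).toReal := by
          funext k
          rw [hnorm n k]
        rwa [this] at hsum
      have h0 : ‖y n‖ ^ (2:ℝ≥0∞).toReal = 0 := (summable_const_iff _).mp hconst
      have h1 : ‖y n‖ = 0 :=
        ((Real.rpow_eq_zero_iff_of_nonneg (norm_nonneg _)).mp h0).1
      exact norm_eq_zero.mp h1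
    apply lp.ext
    funext n
    rw [lp.coeFn_zero]
    exact hyzero n
  -- Step D: v is an eigenvector of T with eigenvalue lam
  have hkey : ∀ k : ℤ, Complex.I * (a:ℂ) * (rho kh p k : ℂ) * conj (u k)
      = lam * conj (y k) := by
    intro k
    have h := congrArg conj (hrec k)
    rw [map_mul, map_mul, map_neg, hconj_c, neg_neg, Complex.conj_conj] at h
    calc Complex.I * (a:ℂ) * (rho kh p k : ℂ) * conj (u k)
        = c k * conj (y (k-1) + y (k+1)) := by rw [hcdef]
      _ = lam * conj (y k) := h
  have hTv : ∀ n : ℤ, (T v : ∀ _ : ℤ, ℂ) n = lam * conj (u n) := by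
    intro n
    rw [hT]
    have e1 : (v : ∀ _ : ℤ, ℂ) (n-1) = conj (u (n-1)) := rfl
    have e2 : (v : ∀ _ : ℤ, ℂ) (n+1) = conj (u (n+1)) := rfl
    rw [e1, e2]
    calc Complex.I * (a:ℂ) * ((rho kh p (n-1) : ℂ) * conj (u (n-1))
          + (rho kh p (n+1) : ℂ) * conj (u (n+1)))
        = Complex.I * (a:ℂ) * (rho kh p (n-1) : ℂ) * conj (u (n-1))
          + Complex.I * (a:ℂ) * (rho kh p (n+1) : ℂ) * conj (u (n+1)) := by ring
      _ = lam * conj (y (n-1)) + lam * conj (y (n+1)) := by rw [hkey, hkey]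
      _ = lam * conj (u n) := by rw [hudef]; simp only [map_add]; ring
  have hveq : T v = lam • v := by
    apply lp.ext
    funext n
    rw [hTv n, lp.coeFn_smul, Pi.smul_apply, smul_eq_mul, hva]
  have hv0 : v = 0 := by
    apply hinj
    show T v - lam • v = T 0 - lam • 0
    simp [hveq]
  exact hvne hv0
end
end
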